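/- arXiv:1902.10983 — 2 statements merged into one kernel-verified Lean document; each statement's English description precedes it below -/
import Mathlib

section
/- Let H = (V,E) be a connected multigraph with |V| ≥ 2, let H' be the multigraph obtained by duplicating every edge of H, let C be an Eulerian cycle of H', and for an edge e of H' let α_e be the word over alphabet V spelled by the Eulerian path obtained from C by deleting e. Then cutwidth(H) ≤ loc(α_e) ≤ cutwidth(H) + 1. Moreover, there exists a vertex v ∈ V such that loc(α_e) = cutwidth(H) for every edge e of C incident to v. -/
/-! Mark the vertices in the order of an arrangement `L`. Reading the Eulerian path `α_e` and
closing it up through the deleted edge `e` traverses every edge of `H` exactly twice, so the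
positions where `α_e` enters or leaves the marked set `S`, counted cyclically, number twice the
cut of `S` in `H`. Counted linearly, two such changes delimit each marked block, except that a
block touching both ends of `α_e` is cut in two by the closing edge. Hence
`#blocks(S) = cut(S) + [both endpoints of e lie in S]`, and marking sequences are exactly linear
arrangements with marking number between the cut value and the cut value plus one. If `v` is the
last vertex of an optimal arrangement and `e` is incident to `v`, the correction term vanishes at
every stage but the last, where the single block is paid for by the cutwidth being positive. -/

noncomputable section

attribute [local instance] Classical.propDecidable

variable {X : Type*} [DecidableEq X]

/-- Number of maximal blocks of `true`s in a list of booleans, where the first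
argument is the preceding symbol. -/
def blocksAux : Bool → List Bool → ℕ
  | _, [] => 0
  | prev, b :: rest => (if b = true ∧ prev = false then 1 else 0) + blocksAux b rest

/-- Number of maximal contiguous blocks of positions of `w` whose letter lies in `S`. -/
def blockCount (w : List X) (S : List X) : ℕ :=
  blocksAux false (w.map (fun x => decide (x ∈ S)))

/-- `σ` is a marking sequence for `w`: an enumeration, without repetition,
of the alphabet of `w`. -/
def IsMarkingSeq (w σ : List X) : Prop := σ.Nodup ∧ σ.toFinset = w.toFinset

/-- The marking number of the marking sequence `σ` on `w`: the maximum, over all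
stages `i`, of the number of maximal contiguous marked blocks after marking the
first `i` letters of `σ`. -/
def markingNumber (w σ : List X) : ℕ :=
  Finset.sup (Finset.range (σ.length + 1)) (fun i => blockCount w (σ.take i))

/-- The locality number of `w`: the minimum marking number over all marking
sequences for `w`. -/
def locality (w : List X) : ℕ :=
  sInf {n | ∃ σ, IsMarkingSeq w σ ∧ markingNumber w σ = n}

variable {V : Type*} [DecidableEq V]

/-- Size of the largest cut of the linear arrangement `L` for the multigraph with
edge multiset `E`: the maximum, over prefixes of `L`, of the number of edges with
exactly one endpoint in the prefix. -/
def cutVal (E : Multiset (Sym2 V)) (L : List V) : ℕ :=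
  Finset.sup (Finset.range (L.length + 1)) (fun i =>
    Multiset.card (E.filter
      (fun e => (∃ v ∈ e, v ∈ L.take i) ∧ ¬ (∀ v ∈ e, v ∈ L.take i))))

/-- The cutwidth of the multigraph with vertex set `Vs` and edge multiset `E`:
the minimum cut value over all linear arrangements of the vertices. -/
def cutwidthM (Vs : Finset V) (E : Multiset (Sym2 V)) : ℕ :=
  sInf {n | ∃ L : List V, L.Nodup ∧ L.toFinset = Vs ∧ cutVal E L = n}


open List

section Blocks

variable {α : Type*}

lemma two_mul_blocksAux_map (p : α → Bool) (y : α) (r : List α) :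
    2 * blocksAux (p y) (r.map p) + (p y).toNat =
      ((y :: r).zip r).countP (fun q => p q.1 != p q.2)
        + (p ((y :: r).getLast (cons_ne_nil y r))).toNat := by
  induction r generalizing y with
  | nil => simp [blocksAux]
  | cons z r ih =>
    have := ih z
    rw [getLast_cons (cons_ne_nil z r), zip_cons_cons, countP_cons]
    simp only [map_cons, blocksAux]
    cases p y <;> cases hz : p z <;> simp [hz] at this ⊢ <;> omega

lemma zip_cons_append_singleton (x y : α) (r : List α) :
    (x :: r).zip (r ++ [y]) = (x :: r).zip r ++ [((x :: r).getLast (cons_ne_nil x r), y)] := by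
  induction r generalizing x with
  | nil => rfl
  | cons z r ih => simp [ih]

variable [DecidableEq α]

def crosses (S : List α) (q : α × α) : Bool := decide (q.1 ∈ S) != decide (q.2 ∈ S)

lemma two_mul_blockCount (w S : List α) (hw : w ≠ []) :
    2 * blockCount w S = (w.zip (w.rotate 1)).countP (crosses S)
      + 2 * if w.head hw ∈ S ∧ w.getLast hw ∈ S then 1 else 0 := by
  obtain ⟨x, r, rfl⟩ := exists_cons_of_ne_nil hw
  have key : 2 * blocksAux (decide (x ∈ S)) (r.map fun v => decide (v ∈ S))
        + (decide (x ∈ S)).toNat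
      = ((x :: r).zip r).countP (crosses S)
        + (decide ((x :: r).getLast (cons_ne_nil x r) ∈ S)).toNat :=
    two_mul_blocksAux_map (fun v => decide (v ∈ S)) x r
  rw [rotate_cons_succ, rotate_zero, zip_cons_append_singleton, countP_append, countP_singleton]
  simp only [blockCount, map_cons, blocksAux, crosses, head_cons] at key ⊢
  by_cases hx : x ∈ S <;> by_cases hl : (x :: r).getLast (cons_ne_nil x r) ∈ S <;>
    simp [hx, hl] at key ⊢ <;> omega

end Blocks

section Cycles

variable {α : Type*}

lemma zip_rotate_one_rotate_perm (l : List α) (n : ℕ) :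
    (l.rotate n).zip ((l.rotate n).rotate 1) ~ l.zip (l.rotate 1) := by
  rw [rotate_rotate, Nat.add_comm, ← rotate_rotate, zip_eq_zipWith, zip_eq_zipWith,
    ← zipWith_rotate_distrib _ _ _ _ (length_rotate l 1).symm]
  exact rotate_perm _ _

lemma zip_tail_perm_of_head_eq_getLast (l : List α) (hl : l ≠ [])
    (hclosed : l.head hl = l.getLast hl) :
    l.zip l.tail ~ l.tail.zip (l.tail.rotate 1) := by
  obtain ⟨x, _ | ⟨y, r⟩, rfl⟩ := exists_cons_of_ne_nil hl
  · simp
  rw [getLast_cons (cons_ne_nil y r)] at hclosed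
  rw [tail_cons, rotate_cons_succ, rotate_zero, zip_cons_append_singleton, ← hclosed]
  exact (perm_append_singleton _ _).symm

lemma drop_succ_append_take_tail (l : List α) {j : ℕ} (hj : j < l.length) :
    l.drop (j + 1) ++ l.tail.take j = l.tail.rotate j := by
  rw [rotate_eq_drop_append_take (by rw [length_tail]; omega), ← drop_one, drop_drop,
    Nat.add_comm]

end Cycles

lemma forall_eq_of_forall_mem_zip_tail {α β : Type*} (p : α → β) :
    ∀ {l : List α}, (∀ q ∈ l.zip l.tail, p q.1 = p q.2) → ∀ x ∈ l, ∀ y ∈ l, p x = p y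
  | [], _ => by simp
  | [a], _ => by simp
  | a :: b :: r, h => by
    have hab : p a = p b := h (a, b) mem_cons_self
    have ih := forall_eq_of_forall_mem_zip_tail p (l := b :: r)
      fun q hq => h q (mem_cons_of_mem _ hq)
    have hb : ∀ x ∈ a :: b :: r, p x = p b := by
      rintro x (_ | ⟨_, hx⟩)
      · exact hab
      · exact ih x hx b mem_cons_self
    intro x hx y hy
    rw [hb x hx, hb y hy]

lemma getLast_notMem_take {α : Type*} {L : List α} (hL : L.Nodup) (hne : L ≠ []) {i : ℕ}
    (hi : i < L.length) : L.getLast hne ∉ L.take i := by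
  have hd : L.drop i ≠ [] := by simp; omega
  rw [← take_append_drop i L] at hL
  exact fun h => disjoint_of_nodup_append hL h (getLast_drop hd ▸ getLast_mem hd)

section Cuts

variable {α : Type*}

def cutSize (E : Multiset (Sym2 α)) (S : List α) : ℕ :=
  Multiset.card (E.filter fun e => (∃ v ∈ e, v ∈ S) ∧ ¬ ∀ v ∈ e, v ∈ S)

lemma cutVal_eq_sup_cutSize (E : Multiset (Sym2 α)) (L : List α) :
    cutVal E L = (Finset.range (L.length + 1)).sup fun i => cutSize E (L.take i) := rfl

lemma cutSize_eq_zero (E : Multiset (Sym2 α)) (S : List α) (hE : ∀ e ∈ E, ∀ v ∈ e, v ∈ S) :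
    cutSize E S = 0 :=
  Multiset.card_eq_zero.mpr <| Multiset.filter_eq_nil.mpr fun e he h => h.2 (hE e he)

variable [DecidableEq α]

lemma two_mul_cutSize {E : Multiset (Sym2 α)} {l : List α}
    (heuler : Multiset.ofList ((l.zip l.tail).map (fun p => s(p.1, p.2))) = E + E)
    (S : List α) : 2 * cutSize E S = (l.zip l.tail).countP (crosses S) := by
  have h := congrArg (fun M => Multiset.card (M.filter
    fun e => (∃ v ∈ e, v ∈ S) ∧ ¬ ∀ v ∈ e, v ∈ S)) heuler
  simp only [Multiset.filter_add, Multiset.card_add, Multiset.filter_coe, Multiset.coe_card,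
    ← countP_eq_length_filter, countP_map] at h
  rw [cutSize, two_mul, ← h]
  refine countP_congr fun q _ => ?_
  simp only [Function.comp_apply, crosses, Sym2.mem_iff]
  by_cases h1 : q.1 ∈ S <;> by_cases h2 : q.2 ∈ S <;> simp [h1, h2]

lemma cutSize_pos {E : Multiset (Sym2 α)} {l : List α}
    (heuler : Multiset.ofList ((l.zip l.tail).map (fun p => s(p.1, p.2))) = E + E)
    {S : List α} {x y : α} (hx : x ∈ l) (hxS : x ∈ S) (hy : y ∈ l) (hyS : y ∉ S) :
    0 < cutSize E S := by
  suffices 0 < (l.zip l.tail).countP (crosses S) by rw [← two_mul_cutSize heuler] at this; omega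
  by_contra! h
  have hconst := forall_eq_of_forall_mem_zip_tail (fun v => decide (v ∈ S))
    fun q hq => by simpa [crosses] using countP_eq_zero.mp (Nat.le_zero.mp h) q hq
  simpa [hxS, hyS] using hconst x hx y hy

end Cuts

section EulerWord

variable {α : Type*}

lemma head_drop_succ_append_take_tail (l : List α) {j : ℕ} (hj : j + 1 < l.length)
    (h : l.drop (j + 1) ++ l.tail.take j ≠ []) :
    (l.drop (j + 1) ++ l.tail.take j).head h = l[j + 1] := by
  simp [head_append_of_ne_nil (l := l.drop (j + 1)) (by simp; omega)]

lemma getLast_drop_succ_append_take_tail (l : List α) (hl : l ≠ [])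
    (hclosed : l.head hl = l.getLast hl) {j : ℕ} (hj : j + 1 < l.length)
    (h : l.drop (j + 1) ++ l.tail.take j ≠ []) :
    (l.drop (j + 1) ++ l.tail.take j).getLast h = l[j] := by
  rw [← Option.some_inj, ← getLast?_eq_some_getLast, getLast?_append, getLast?_take,
    getLast?_drop]
  rcases j with _ | j
  · simp [if_neg (show ¬ l.length ≤ 1 by omega), getLast?_eq_some_getLast hl, ← hclosed,
      head_eq_getElem]
  · simp

lemma toFinset_drop_succ_append_take_tail [DecidableEq α] (l : List α) (hl : l ≠ [])
    (hclosed : l.head hl = l.getLast hl) {j : ℕ} (hj : j + 1 < l.length) :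
    (l.drop (j + 1) ++ l.tail.take j).toFinset = l.toFinset := by
  rw [drop_succ_append_take_tail l (by omega), toFinset_eq_of_perm _ _ (rotate_perm _ _)]
  obtain ⟨x, t, rfl⟩ := exists_cons_of_ne_nil hl
  have ht : t ≠ [] := by rintro rfl; simp at hj
  rw [head_cons, getLast_cons ht] at hclosed
  simp [hclosed ▸ getLast_mem ht]

lemma blockCount_drop_succ_append_take_tail [DecidableEq α] {E : Multiset (Sym2 α)}
    {l : List α} (hl : l ≠ []) (hclosed : l.head hl = l.getLast hl)
    (heuler : Multiset.ofList ((l.zip l.tail).map (fun p => s(p.1, p.2))) = E + E)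
    {j : ℕ} (hj : j + 1 < l.length) (S : List α) :
    blockCount (l.drop (j + 1) ++ l.tail.take j) S
      = cutSize E S + if l[j + 1] ∈ S ∧ l[j] ∈ S then 1 else 0 := by
  have hw : l.drop (j + 1) ++ l.tail.take j ≠ [] := by simp; omega
  have hcount := two_mul_blockCount _ S hw
  have hperm : (l.drop (j + 1) ++ l.tail.take j).zip ((l.drop (j + 1) ++ l.tail.take j).rotate 1)
      ~ l.zip l.tail := by
    rw [drop_succ_append_take_tail l (by omega)]
    exact (zip_rotate_one_rotate_perm _ _).trans
      (zip_tail_perm_of_head_eq_getLast l hl hclosed).symm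
  rw [hperm.countP_eq, ← two_mul_cutSize heuler, head_drop_succ_append_take_tail l hj,
    getLast_drop_succ_append_take_tail l hl hclosed hj] at hcount
  omega

end EulerWord

section Comparison

variable {α : Type*} [DecidableEq α] {E : Multiset (Sym2 α)} {w : List α} {a b : α}

lemma cutVal_le_markingNumber
    (hblock : ∀ S, blockCount w S = cutSize E S + if a ∈ S ∧ b ∈ S then 1 else 0)
    (σ : List α) : cutVal E σ ≤ markingNumber w σ :=
  Finset.sup_mono_fun fun i _ => by rw [hblock]; exact Nat.le_add_right _ _

lemma markingNumber_le_cutVal_add_one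
    (hblock : ∀ S, blockCount w S = cutSize E S + if a ∈ S ∧ b ∈ S then 1 else 0)
    (σ : List α) : markingNumber w σ ≤ cutVal E σ + 1 :=
  Finset.sup_le fun i hi => by
    have := Finset.le_sup (f := fun i => cutSize E (σ.take i)) hi
    rw [hblock, cutVal_eq_sup_cutSize]
    split_ifs <;> omega

lemma markingNumber_le_cutVal
    (hblock : ∀ S, blockCount w S = cutSize E S + if a ∈ S ∧ b ∈ S then 1 else 0)
    {L : List α} (hL : L.Nodup) (hne : L ≠ []) (hend : a = L.getLast hne ∨ b = L.getLast hne)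
    (hfull : cutSize E L = 0) (hpos : 1 ≤ cutVal E L) : markingNumber w L ≤ cutVal E L :=
  Finset.sup_le fun i hi => by
    rw [hblock]
    rcases Nat.lt_or_ge i L.length with hlt | hge
    · have hnot : ¬ (a ∈ L.take i ∧ b ∈ L.take i) := fun hab =>
        getLast_notMem_take hL hne hlt (hend.elim (· ▸ hab.1) (· ▸ hab.2))
      rw [if_neg hnot, add_zero]
      exact Finset.le_sup (f := fun i => cutSize E (L.take i)) hi
    · rw [take_of_length_le hge, hfull]
      split_ifs <;> omega

end Comparison

section Optimal

variable {α : Type*} [DecidableEq α]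

lemma locality_le_markingNumber {w σ : List α} (hσ : IsMarkingSeq w σ) :
    locality w ≤ markingNumber w σ :=
  Nat.sInf_le ⟨σ, hσ, rfl⟩

lemma exists_markingNumber_eq_locality (w : List α) :
    ∃ σ, IsMarkingSeq w σ ∧ markingNumber w σ = locality w :=
  Nat.sInf_mem (s := {n | ∃ σ, IsMarkingSeq w σ ∧ markingNumber w σ = n})
    ⟨_, w.toFinset.toList, ⟨Finset.nodup_toList _, Finset.toList_toFinset _⟩, rfl⟩

lemma cutwidthM_le_cutVal {Vs : Finset α} (E : Multiset (Sym2 α)) {L : List α} (hL : L.Nodup)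
    (hLVs : L.toFinset = Vs) : cutwidthM Vs E ≤ cutVal E L :=
  Nat.sInf_le ⟨L, hL, hLVs, rfl⟩

lemma exists_cutVal_eq_cutwidthM (Vs : Finset α) (E : Multiset (Sym2 α)) :
    ∃ L : List α, L.Nodup ∧ L.toFinset = Vs ∧ cutVal E L = cutwidthM Vs E :=
  Nat.sInf_mem (s := {n | ∃ L : List α, L.Nodup ∧ L.toFinset = Vs ∧ cutVal E L = n})
    ⟨_, Vs.toList, Finset.nodup_toList Vs, Finset.toList_toFinset Vs, rfl⟩

variable {Vs : Finset α} {E : Multiset (Sym2 α)} {w : List α} {a b : α}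

lemma cutwidthM_le_locality
    (hblock : ∀ S, blockCount w S = cutSize E S + if a ∈ S ∧ b ∈ S then 1 else 0)
    (hw : w.toFinset = Vs) : cutwidthM Vs E ≤ locality w := by
  obtain ⟨σ, hσ, hσw⟩ := exists_markingNumber_eq_locality w
  calc cutwidthM Vs E ≤ cutVal E σ := cutwidthM_le_cutVal E hσ.1 (hσ.2.trans hw)
    _ ≤ markingNumber w σ := cutVal_le_markingNumber hblock σ
    _ = locality w := hσw

lemma locality_le_cutwidthM_add_one
    (hblock : ∀ S, blockCount w S = cutSize E S + if a ∈ S ∧ b ∈ S then 1 else 0)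
    (hw : w.toFinset = Vs) : locality w ≤ cutwidthM Vs E + 1 := by
  obtain ⟨L, hL, hLVs, hLE⟩ := exists_cutVal_eq_cutwidthM Vs E
  calc locality w ≤ markingNumber w L := locality_le_markingNumber ⟨hL, hLVs.trans hw.symm⟩
    _ ≤ cutVal E L + 1 := markingNumber_le_cutVal_add_one hblock L
    _ = cutwidthM Vs E + 1 := by rw [hLE]

lemma one_le_cutVal {l : List α}
    (heuler : Multiset.ofList ((l.zip l.tail).map (fun p => s(p.1, p.2))) = E + E)
    {L : List α} (hL : L.Nodup) (hLl : L ⊆ l) (hlen : 2 ≤ L.length) : 1 ≤ cutVal E L := by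
  have h0 : L[0] ∈ L.take 1 := by simp [take_one, head?_eq_getElem?]
  have h1 : L[1] ∉ L.take 1 := by
    simp [take_one, head?_eq_getElem?, getElem?_eq_getElem (show 0 < L.length by omega),
      hL.getElem_inj_iff]
  calc 1 ≤ cutSize E (L.take 1) :=
        cutSize_pos heuler (hLl (getElem_mem _)) h0 (hLl (getElem_mem _)) h1
    _ ≤ cutVal E L := Finset.le_sup (f := fun i => cutSize E (L.take i)) (by simp; omega)

end Optimal

/-- The cycle `c = v₀ v₁ ⋯ v_m` (`v₀ = v_m`) is an Eulerian cycle of `H'` when its consecutive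
pairs form `E + E`; deleting its `j`-th edge `{v_j, v_{j+1}}` leaves the Eulerian path spelling
`v_{j+1} ⋯ v_m v_1 ⋯ v_j = c.drop (j + 1) ++ c.tail.take j`. -/
theorem locality_eulerian_word_cutwidth
    (Vs : Finset V) (E : Multiset (Sym2 V)) (h2 : 2 ≤ Vs.card)
    (hE : ∀ e ∈ E, ∀ v ∈ e, v ∈ Vs)
    (c : List V) (hc : c ≠ [])
    (hclosed : c.head hc = c.getLast hc)
    (hvisit : c.toFinset = Vs)
    (heuler : Multiset.ofList ((c.zip c.tail).map (fun p => s(p.1, p.2))) = E + E) :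
    (∀ j, j + 1 < c.length →
        cutwidthM Vs E ≤ locality (c.drop (j + 1) ++ c.tail.take j) ∧
        locality (c.drop (j + 1) ++ c.tail.take j) ≤ cutwidthM Vs E + 1) ∧
    ∃ v ∈ Vs, ∀ j, j + 1 < c.length →
        (getElem? c j = some v ∨ getElem? c (j + 1) = some v) →
        locality (c.drop (j + 1) ++ c.tail.take j) = cutwidthM Vs E := by
  have hblock j (hj : j + 1 < c.length) :=
    blockCount_drop_succ_append_take_tail hc hclosed heuler hj
  have hword j (hj : j + 1 < c.length) : (c.drop (j + 1) ++ c.tail.take j).toFinset = Vs := by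
    rw [toFinset_drop_succ_append_take_tail c hc hclosed hj, hvisit]
  obtain ⟨L, hL, hLVs, hLcw⟩ := exists_cutVal_eq_cutwidthM Vs E
  have hlen : 2 ≤ L.length := by rwa [← toFinset_card_of_nodup hL, hLVs]
  have hne : L ≠ [] := ne_nil_of_length_pos (by omega)
  have hLc : L ⊆ c := fun x hx => mem_toFinset.mp (hvisit ▸ hLVs ▸ mem_toFinset.mpr hx)
  have hpos : 1 ≤ cutVal E L := one_le_cutVal heuler hL hLc hlen
  have hfull : cutSize E L = 0 := cutSize_eq_zero E L fun e he v hv => by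
    simpa [← hLVs] using hE e he v hv
  refine ⟨fun j hj => ⟨cutwidthM_le_locality (hblock j hj) (hword j hj),
    locality_le_cutwidthM_add_one (hblock j hj) (hword j hj)⟩,
    L.getLast hne, hLVs ▸ mem_toFinset.mpr (getLast_mem hne), fun j hj hv => ?_⟩
  have hend := hv.symm.imp
    (fun h => Option.some_inj.mp ((getElem?_eq_getElem hj).symm.trans h))
    (fun h => Option.some_inj.mp ((getElem?_eq_getElem (Nat.lt_of_succ_lt hj)).symm.trans h))
  refine le_antisymm ?_ (cutwidthM_le_locality (hblock j hj) (hword j hj))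
  calc locality (c.drop (j + 1) ++ c.tail.take j)
      ≤ markingNumber (c.drop (j + 1) ++ c.tail.take j) L :=
        locality_le_markingNumber ⟨hL, hLVs.trans (hword j hj).symm⟩
    _ ≤ cutVal E L := markingNumber_le_cutVal (hblock j hj) hL hne hend hfull hpos
    _ = cutwidthM Vs E := hLcw
end
end

section
/- For k ≥ 1, the word β = (x₁x₂)^k satisfies loc(β) = pathwidth(G_β) = k, where G_β is the graph on positions of β with edges between consecutive positions and between all pairs of positions carrying the same letter. -/
noncomputable section

attribute [local instance] Classical.propDecidable

variable {X : Type*} [DecidableEq X]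

/-- `B 0, B 1, ..., B m` is a path decomposition of the graph `G`: every edge is
covered by some bag, and the bags containing any fixed vertex form a nonempty
contiguous interval of indices. -/
def IsPathDecomp {W : Type*} (G : SimpleGraph W) (m : ℕ) (B : ℕ → Finset W) : Prop :=
  (∀ u v, G.Adj u v → ∃ t ≤ m, u ∈ B t ∧ v ∈ B t) ∧
  (∀ v : W, ∃ i j, i ≤ j ∧ j ≤ m ∧ ∀ t, v ∈ B t ↔ (i ≤ t ∧ t ≤ j))

/-- The pathwidth of a graph: the minimum, over path decompositions, of the
maximum bag size minus one. -/
def pathwidth {W : Type*} (G : SimpleGraph W) : ℕ :=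
  sInf {w | ∃ m B, IsPathDecomp G m B ∧ ∀ t, (B t).card ≤ w + 1}

/-- The graph `G_α` of the word `α`: vertices are the positions of `α`, and edges
connect consecutive positions as well as every pair of distinct positions carrying
the same letter. -/
def wordGraph (α : List X) : SimpleGraph (Fin α.length) :=
  SimpleGraph.fromRel (fun i j => ((i : ℕ) + 1 = (j : ℕ)) ∨ α.get i = α.get j)

/-!
Marking one letter of `(x₁x₂)^k` already produces `k` blocks, and no set of letters produces more
than `k` blocks in a word of length `2k`, so every marking sequence has marking number `k`.

In `G_β` the even and the odd positions form two `k`-cliques joined by the matching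
`{2j, 2j + 1}`. By the Helly property of intervals each clique lies in a bag; every bag between
these two meets every matched pair, and clamping a bag that covers one matched edge into this range
gives a bag with `k + 1` vertices. Conversely, the bags that trade the even positions `2j` with
`j ≥ t` for the odd positions `2j + 1` with `j ≤ t`, for `t = 0, …, k`, have at most `k + 1`
vertices.
-/

section Marking

lemma two_mul_blocksAux_add_toNat_le (p : Bool) (l : List Bool) :
    2 * blocksAux p l + p.toNat ≤ l.length + 1 := by
  induction l generalizing p with
  | nil => cases p <;> simp [blocksAux]
  | cons b l ih => have := ih b; cases b <;> cases p <;> simp [blocksAux] at * <;> omega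

lemma two_mul_blockCount_le (w S : List X) : 2 * blockCount w S ≤ w.length + 1 := by
  simpa [blockCount] using two_mul_blocksAux_add_toNat_le false (w.map fun x => decide (x ∈ S))

lemma blockCount_le_markingNumber (w σ : List X) {i : ℕ} (hi : i ≤ σ.length) :
    blockCount w (σ.take i) ≤ markingNumber w σ :=
  Finset.le_sup (f := fun i => blockCount w (σ.take i)) (by simpa [Nat.lt_succ_iff] using hi)

lemma isMarkingSeq_dedup (w : List X) : IsMarkingSeq w w.dedup :=
  ⟨w.nodup_dedup, by ext; simp⟩

lemma locality_eq_of_forall_markingNumber_eq {w : List X} {n : ℕ}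
    (h : ∀ σ, IsMarkingSeq w σ → markingNumber w σ = n) : locality w = n := by
  have hset : {n | ∃ σ, IsMarkingSeq w σ ∧ markingNumber w σ = n} = {n} := by
    ext m
    constructor
    · rintro ⟨σ, hσ, rfl⟩
      exact h σ hσ
    · rintro rfl
      exact ⟨_, isMarkingSeq_dedup w, h _ (isMarkingSeq_dedup w)⟩
  rw [locality, hset, csInf_singleton]

end Marking

section PathDecomp

variable {W : Type*} {G : SimpleGraph W} {m : ℕ} {B : ℕ → Finset W}

lemma pathwidth_eq_of_isPathDecomp {n : ℕ} (hB : IsPathDecomp G m B)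
    (hcard : ∀ t, (B t).card ≤ n + 1)
    (hlarge : ∀ m' B', IsPathDecomp G m' B' → ∃ t, n < (B' t).card) : pathwidth G = n := by
  refine le_antisymm (Nat.sInf_le ⟨m, B, hB, hcard⟩) (le_csInf ⟨n, m, B, hB, hcard⟩ ?_)
  rintro n' ⟨m', B', hB', hcard'⟩
  obtain ⟨t, ht⟩ := hlarge m' B' hB'
  have := hcard' t
  omega

namespace IsPathDecomp

lemma mem_of_mem_of_mem (hB : IsPathDecomp G m B) {v : W} {s t r : ℕ} (hs : v ∈ B s)
    (hr : v ∈ B r) (hst : s ≤ t) (htr : t ≤ r) : v ∈ B t := by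
  obtain ⟨i, j, -, -, hv⟩ := hB.2 v
  rw [hv] at hs hr ⊢
  omega

lemma mem_or_mem_of_adj (hB : IsPathDecomp G m B) {u v : W} (huv : G.Adj u v) {s t r : ℕ}
    (hu : u ∈ B s) (hv : v ∈ B r) (hst : s ≤ t) (htr : t ≤ r) : u ∈ B t ∨ v ∈ B t := by
  obtain ⟨t', -, hut', hvt'⟩ := hB.1 u v huv
  rcases le_total t t' with htt' | htt'
  · exact .inl (hB.mem_of_mem_of_mem hu hut' hst htt')
  · exact .inr (hB.mem_of_mem_of_mem hvt' hv htt' htr)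

/-- Helly property of intervals. -/
lemma exists_subset_of_isClique (hB : IsPathDecomp G m B) {C : Finset W} (hC : C.Nonempty)
    (hclique : G.IsClique (C : Set W)) : ∃ t, C ⊆ B t := by
  choose first last hle _ hmem using hB.2
  obtain ⟨v₀, hv₀, hmax⟩ := C.exists_mem_eq_sup' hC first
  refine ⟨first v₀, fun v hv => (hmem v _).2 ⟨hmax ▸ C.le_sup' first hv, ?_⟩⟩
  obtain rfl | hne := eq_or_ne v v₀
  · exact hle v
  obtain ⟨t, -, hvt, hv₀t⟩ := hB.1 v v₀ (hclique hv hv₀ hne)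
  have := (hmem v t).1 hvt
  have := (hmem v₀ t).1 hv₀t
  omega

variable {k : ℕ} {e o : Fin k → W}

/-- Every bag between `s` and `r` meets each of the `k` disjoint pairs `{e j, o j}`. -/
lemma lt_card_of_matching (hB : IsPathDecomp G m B) (hinj : Function.Injective (Sum.elim e o))
    (hmatch : ∀ j, G.Adj (e j) (o j)) {s t r : ℕ} (he : ∀ j, e j ∈ B s) (ho : ∀ j, o j ∈ B r)
    (hst : s ≤ t) (htr : t ≤ r) (i : Fin k) (hei : e i ∈ B t) (hoi : o i ∈ B t) :
    k < (B t).card := by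
  set f : Fin k → ℕ := fun j => (if e j ∈ B t then 1 else 0) + if o j ∈ B t then 1 else 0
  have hcover (j : Fin k) : 1 ≤ f j := by
    rcases hB.mem_or_mem_of_adj (hmatch j) (he j) (ho j) hst htr with h | h <;> simp [f, h]
  have hf : k < ∑ j, f j :=
    calc k = ∑ _j : Fin k, 1 := by simp
      _ < ∑ j, f j :=
        Finset.sum_lt_sum (fun j _ => hcover j) ⟨i, Finset.mem_univ _, by simp [f, hei, hoi]⟩
  have hcount : (Finset.univ.filter fun x => Sum.elim e o x ∈ B t).card = ∑ j, f j := by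
    rw [Finset.card_filter, Fintype.sum_sum_type, ← Finset.sum_add_distrib]
    rfl
  calc k < _ := hcount ▸ hf
    _ ≤ (B t).card :=
      Finset.card_le_card_of_injOn _ (fun x hx => by simpa using hx) hinj.injOn

lemma exists_lt_card_of_le (hB : IsPathDecomp G m B) (hinj : Function.Injective (Sum.elim e o))
    (hmatch : ∀ j, G.Adj (e j) (o j)) {s r : ℕ} (hsr : s ≤ r) (hes : ∀ j, e j ∈ B s)
    (hor : ∀ j, o j ∈ B r) (i : Fin k) : ∃ t, k < (B t).card := by
  obtain ⟨t, -, het, hot⟩ := hB.1 _ _ (hmatch i)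
  rcases lt_or_ge t s with hts | hst
  · exact ⟨s, hB.lt_card_of_matching hinj hmatch hes hor le_rfl hsr i (hes i)
      (hB.mem_of_mem_of_mem hot (hor i) hts.le hsr)⟩
  rcases le_or_gt t r with htr | hrt
  · exact ⟨t, hB.lt_card_of_matching hinj hmatch hes hor hst htr i het hot⟩
  · exact ⟨r, hB.lt_card_of_matching hinj hmatch hes hor hsr le_rfl i
      (hB.mem_of_mem_of_mem (hes i) het hsr hrt.le) (hor i)⟩

lemma exists_forall_mem_of_isClique_range (hB : IsPathDecomp G m B) {f : Fin k → W}
    (hf : G.IsClique (Set.range f)) (i : Fin k) : ∃ t, ∀ j, f j ∈ B t := by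
  obtain ⟨t, ht⟩ := hB.exists_subset_of_isClique (C := Finset.univ.image f) ⟨f i, by simp⟩
    (by simpa using hf)
  exact ⟨t, fun j => ht (by simp)⟩

lemma exists_lt_card (hB : IsPathDecomp G m B) (hinj : Function.Injective (Sum.elim e o))
    (he : G.IsClique (Set.range e)) (ho : G.IsClique (Set.range o))
    (hmatch : ∀ j, G.Adj (e j) (o j)) (i : Fin k) : ∃ t, k < (B t).card := by
  obtain ⟨s, hes⟩ := hB.exists_forall_mem_of_isClique_range he i
  obtain ⟨r, hor⟩ := hB.exists_forall_mem_of_isClique_range ho i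
  rcases le_total s r with hsr | hrs
  · exact hB.exists_lt_card_of_le hinj hmatch hsr hes hor i
  · refine hB.exists_lt_card_of_le (e := o) (o := e) ?_ (fun j => (hmatch j).symm) hrs hor hes i
    rw [← Sum.elim_swap]
    exact hinj.comp Sum.swap_leftInverse.injective

end IsPathDecomp

end PathDecomp

section AlternatingWord

variable {α : Type*} (a b : α) (k : ℕ)

def alternatingWord : List α := (List.replicate k [a, b]).flatten

lemma length_alternatingWord : (alternatingWord a b k).length = 2 * k := by
  simp [alternatingWord, mul_comm]

lemma alternatingWord_succ : alternatingWord a b (k + 1) = a :: b :: alternatingWord a b k := by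
  simp [alternatingWord, List.replicate_succ]

lemma getElem_alternatingWord (i : ℕ) (hi : i < (alternatingWord a b k).length) :
    (alternatingWord a b k)[i] = if i % 2 = 0 then a else b := by
  induction k generalizing i with
  | zero => simp [alternatingWord] at hi
  | succ k ih =>
    simp only [alternatingWord_succ] at hi ⊢
    match i with
    | 0 => simp
    | 1 => simp
    | i + 2 => simpa [Nat.add_mod_right] using ih i (by simpa using hi)

lemma map_alternatingWord {β : Type*} (f : α → β) :
    (alternatingWord a b k).map f = alternatingWord (f a) (f b) k := by
  simp [alternatingWord, List.map_flatten, List.map_replicate]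

variable {a b k}

lemma mem_alternatingWord (hk : 0 < k) {x : α} : x ∈ alternatingWord a b k ↔ x = a ∨ x = b := by
  simp [alternatingWord, hk.ne']

lemma blocksAux_alternatingWord_true_false : blocksAux false (alternatingWord true false k) = k := by
  induction k with
  | zero => simp [alternatingWord, blocksAux]
  | succ k ih => simp [alternatingWord_succ, blocksAux, ih, Nat.add_comm]

lemma blocksAux_alternatingWord_false_true (p : Bool) :
    blocksAux p (alternatingWord false true k) = k := by
  induction k generalizing p with
  | zero => simp [alternatingWord, blocksAux]
  | succ k ih => simp [alternatingWord_succ, blocksAux, ih, Nat.add_comm]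

end AlternatingWord

section Locality

variable {a b : X} {k : ℕ}

lemma blockCount_alternatingWord_singleton (hab : a ≠ b) {x : X} (hx : x = a ∨ x = b) :
    blockCount (alternatingWord a b k) [x] = k := by
  rw [blockCount, map_alternatingWord]
  rcases hx with rfl | rfl
  · simpa [hab.symm] using blocksAux_alternatingWord_true_false
  · simpa [hab] using blocksAux_alternatingWord_false_true false

lemma markingNumber_alternatingWord (hab : a ≠ b) (hk : 0 < k) {σ : List X}
    (hσ : IsMarkingSeq (alternatingWord a b k) σ) : markingNumber (alternatingWord a b k) σ = k := by
  refine le_antisymm (Finset.sup_le fun i _ => ?_) ?_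
  · have := two_mul_blockCount_le (alternatingWord a b k) (σ.take i)
    rw [length_alternatingWord] at this
    omega
  · obtain ⟨-, halphabet⟩ := hσ
    cases σ with
    | nil =>
      have := congrArg (a ∈ ·) halphabet
      simp [mem_alternatingWord hk] at this
    | cons x τ =>
      have hx : x ∈ alternatingWord a b k := by simpa using congrArg (x ∈ ·) halphabet
      have := blockCount_le_markingNumber (alternatingWord a b k) (x :: τ) (i := 1) (by simp)
      rwa [List.take_one, List.head?_cons, Option.toList_some,
        blockCount_alternatingWord_singleton hab ((mem_alternatingWord hk).1 hx)] at this

lemma locality_alternatingWord (hab : a ≠ b) (hk : 0 < k) :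
    locality (alternatingWord a b k) = k :=
  locality_eq_of_forall_markingNumber_eq fun _ hσ => markingNumber_alternatingWord hab hk hσ

end Locality

section Pathwidth

variable {α : Type*} {a b : α} {k : ℕ}

lemma wordGraph_alternatingWord_adj (hab : a ≠ b) {u v : Fin (alternatingWord a b k).length} :
    (wordGraph (alternatingWord a b k)).Adj u v ↔
      u ≠ v ∧ ((u : ℕ) + 1 = v ∨ (v : ℕ) + 1 = u ∨ (u : ℕ) % 2 = (v : ℕ) % 2) := by
  have hletter (i j : Fin (alternatingWord a b k).length) :
      (alternatingWord a b k).get i = (alternatingWord a b k).get j ↔ (i : ℕ) % 2 = (j : ℕ) % 2 := by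
    simp only [List.get_eq_getElem, getElem_alternatingWord]
    split_ifs <;> simp [hab, hab.symm] <;> omega
  simp only [wordGraph, SimpleGraph.fromRel_adj, hletter]
  constructor <;> rintro ⟨hne, h⟩ <;> refine ⟨hne, ?_⟩ <;> omega

def alternatingBags {n : ℕ} (k t : ℕ) : Finset (Fin n) :=
  Finset.univ.filter fun v =>
    ((v : ℕ) % 2 = 0 ∧ t ≤ (v : ℕ) / 2) ∨ ((v : ℕ) % 2 = 1 ∧ (v : ℕ) / 2 ≤ t ∧ t ≤ k)

lemma mem_alternatingBags {n k t : ℕ} {v : Fin n} : v ∈ alternatingBags k t ↔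
    ((v : ℕ) % 2 = 0 ∧ t ≤ (v : ℕ) / 2) ∨ ((v : ℕ) % 2 = 1 ∧ (v : ℕ) / 2 ≤ t ∧ t ≤ k) := by
  simp [alternatingBags]

lemma card_alternatingBags_le {n k : ℕ} (hn : n ≤ 2 * k) (t : ℕ) :
    (alternatingBags (n := n) k t).card ≤ k + 1 := by
  have hinj := Finset.card_le_card_of_injOn (s := alternatingBags k t) (t := Finset.range (k + 1))
    (fun v : Fin n => if (v : ℕ) % 2 = 0 then (v : ℕ) / 2 + 1 else t - (v : ℕ) / 2)
    (fun v hv => by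
      simp only [Finset.coe_range, Set.mem_Iio, Finset.mem_coe, mem_alternatingBags] at hv ⊢
      split_ifs <;> omega)
    (fun u hu v hv huv => by
      simp only [Finset.mem_coe, mem_alternatingBags] at hu hv huv
      split_ifs at huv <;> exact Fin.ext (by omega))
  simpa using hinj

lemma isPathDecomp_alternatingBags (hab : a ≠ b) :
    IsPathDecomp (wordGraph (alternatingWord a b k)) k (alternatingBags k) := by
  have hlt (v : Fin (alternatingWord a b k).length) : (v : ℕ) < 2 * k :=
    length_alternatingWord a b k ▸ v.isLt
  refine ⟨fun u v huv => ?_, fun v => ?_⟩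
  · rw [wordGraph_alternatingWord_adj hab] at huv
    have := hlt u
    have := hlt v
    simp only [mem_alternatingBags]
    rcases Nat.mod_two_eq_zero_or_one u with hu | hu <;>
      rcases Nat.mod_two_eq_zero_or_one v with hv | hv
    · exact ⟨0, by omega⟩
    · exact ⟨(u : ℕ) / 2, by omega⟩
    · exact ⟨(v : ℕ) / 2, by omega⟩
    · exact ⟨k, by omega⟩
  · have := hlt v
    simp only [mem_alternatingBags]
    rcases Nat.mod_two_eq_zero_or_one v with hv | hv
    · exact ⟨0, (v : ℕ) / 2, by omega, by omega, fun t => by omega⟩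
    · exact ⟨(v : ℕ) / 2, k, by omega, by omega, fun t => by omega⟩

lemma exists_lt_card_of_isPathDecomp_wordGraph_alternatingWord (hab : a ≠ b) (hk : 0 < k)
    {m : ℕ} {B : ℕ → Finset (Fin (alternatingWord a b k).length)}
    (hB : IsPathDecomp (wordGraph (alternatingWord a b k)) m B) : ∃ t, k < (B t).card := by
  have hlen := length_alternatingWord a b k
  let e (j : Fin k) : Fin (alternatingWord a b k).length := ⟨2 * j, by omega⟩
  let o (j : Fin k) : Fin (alternatingWord a b k).length := ⟨2 * j + 1, by omega⟩
  have hinj : Function.Injective (Sum.elim e o) := by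
    rintro (i | i) (j | j) h <;> simp [e, o, Fin.ext_iff] at h ⊢ <;> omega
  have hadj {u v : Fin (alternatingWord a b k).length} (hne : u ≠ v) (huv : (u : ℕ) % 2 = v % 2) :
      (wordGraph (alternatingWord a b k)).Adj u v :=
    (wordGraph_alternatingWord_adj hab).2 ⟨hne, by omega⟩
  refine hB.exists_lt_card hinj ?_ ?_ (fun j => (wordGraph_alternatingWord_adj hab).2 ?_) ⟨0, hk⟩
  · rintro _ ⟨i, rfl⟩ _ ⟨j, rfl⟩ hne
    exact hadj hne (by simp [e])
  · rintro _ ⟨i, rfl⟩ _ ⟨j, rfl⟩ hne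
    exact hadj hne (by simp [o, Nat.add_mod])
  · exact ⟨by simp [e, o, Fin.ext_iff], by simp [e, o]⟩

lemma pathwidth_wordGraph_alternatingWord (hab : a ≠ b) (hk : 0 < k) :
    pathwidth (wordGraph (alternatingWord a b k)) = k :=
  pathwidth_eq_of_isPathDecomp (isPathDecomp_alternatingBags hab)
    (card_alternatingBags_le (length_alternatingWord a b k).le)
    fun _ _ => exists_lt_card_of_isPathDecomp_wordGraph_alternatingWord hab hk

end Pathwidth

/-- For `k ≥ 1`, the word `β = (x₁x₂)^k` over two distinct letters satisfies
`loc(β) = pathwidth(G_β) = k`. -/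
theorem locality_and_pathwidth_alternating (x₁ x₂ : X) (hx : x₁ ≠ x₂)
    (k : ℕ) (hk : 1 ≤ k) :
    locality ((List.replicate k [x₁, x₂]).flatten) = k ∧
      pathwidth (wordGraph ((List.replicate k [x₁, x₂]).flatten)) = k :=
  ⟨locality_alternatingWord hx hk, pathwidth_wordGraph_alternatingWord hx hk⟩
end
end
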